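/- Let L be an invertible d×d real matrix, let ρ > 0, and let E ⊂ ℝ^d be the sum of the generalized eigenspaces of L corresponding to (complex) eigenvalues of modulus ρ. Then for every nonzero vector v ∈ E, lim_{n→+∞} (1/n) log‖Lⁿ v‖ = log ρ and lim_{n→−∞} (1/n) log‖Lⁿ v‖ = log ρ. -/

import Mathlib

open scoped Classical NNReal
open MeasureTheory Filter Topology
open scoped ENNReal

noncomputable section

abbrev Rd (d : ℕ) := Fin d → ℝ

/-- The real vector corresponding to an integer vector. -/
def intVec {d : ℕ} (m : Fin d → ℤ) : Rd d := fun i => (m i : ℝ)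

/-- An integer matrix as a real matrix. -/
def matR {d : ℕ} (L : Matrix (Fin d) (Fin d) ℤ) : Matrix (Fin d) (Fin d) ℝ :=
  L.map (Int.cast : ℤ → ℝ)

/-- A real matrix as a continuous linear map on `ℝ^d`. -/
def matCLM {d : ℕ} (A : Matrix (Fin d) (Fin d) ℝ) : Rd d →L[ℝ] Rd d :=
  LinearMap.toContinuousLinearMap (Matrix.toLin' A)

/-- The multiset of complex eigenvalues (with multiplicity) of an integer matrix. -/
def eigsC {d : ℕ} (L : Matrix (Fin d) (Fin d) ℤ) : Multiset ℂ :=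
  ((L.map (Int.cast : ℤ → ℂ)).charpoly).roots

/-- `L` is a hyperbolic automorphism of the torus: an integer matrix, invertible over `ℤ`,
with no eigenvalue of modulus one. -/
def IsHyperbolicAut {d : ℕ} (L : Matrix (Fin d) (Fin d) ℤ) : Prop :=
  IsUnit L.det ∧ ∀ z ∈ eigsC L, ‖z‖ ≠ 1

/-- The characteristic polynomial of `L` is irreducible over `ℚ`. -/
def IsIrreducibleMat {d : ℕ} (L : Matrix (Fin d) (Fin d) ℤ) : Prop :=
  Irreducible ((L.map (Int.cast : ℤ → ℚ)).charpoly)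

/-- `F : ℝ^d → ℝ^d` is a lift of a torus map homotopic to the automorphism `L`. -/
def IsLiftOfDeg {d : ℕ} (L : Matrix (Fin d) (Fin d) ℤ) (F : Rd d → Rd d) : Prop :=
  ∀ (x : Rd d) (m : Fin d → ℤ), F (x + intVec m) = F x + (matR L).mulVec (intVec m)

/-- `H` is (a lift of) a conjugacy between the torus map induced by `F` and the
automorphism `L`: a homeomorphism of the torus with `L ∘ H = H ∘ f`. -/
def IsConjugacyLift {d : ℕ} (L : Matrix (Fin d) (Fin d) ℤ) (F : Rd d → Rd d)
    (H : Rd d → Rd d) : Prop :=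
  Continuous H ∧ Function.Bijective H ∧
    (∀ (x : Rd d) (m : Fin d → ℤ), H (x + intVec m) = H x + intVec m) ∧
    ∃ c : Fin d → ℤ, ∀ x, (matR L).mulVec (H x) = H (F x) + intVec c

/-- `F` is within `δ` of the linear map `L` in the `C¹` distance. -/
def C1Close {d : ℕ} (F : Rd d → Rd d) (L : Matrix (Fin d) (Fin d) ℤ) (δ : ℝ) : Prop :=
  ∀ x : Rd d, ‖F x - (matR L).mulVec x‖ < δ ∧ ‖fderiv ℝ F x - matCLM (matR L)‖ < δ

/-- `F` is within `δ` of the linear map `L` in the `C^r` distance. -/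
def CrClose {d : ℕ} (F : Rd d → Rd d) (L : Matrix (Fin d) (Fin d) ℤ) (r : ℕ) (δ : ℝ) : Prop :=
  ∀ k ≤ r, ∀ x : Rd d,
    ‖iteratedFDeriv ℝ k (fun y => F y - (matR L).mulVec y) x‖ < δ

/-- `F` is (a lift of) a `C^k` diffeomorphism of the torus. -/
def IsCkDiffeoLift {d : ℕ} (k : ℕ∞) (F : Rd d → Rd d) : Prop :=
  ContDiff ℝ k F ∧ Function.Bijective F ∧ ∀ x : Rd d, IsUnit (fderiv ℝ F x)

/-- `H` is (a lift of) a `C^{1+Hölder}` diffeomorphism of the torus. -/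
def IsC1HolderDiffeoLift {d : ℕ} (H : Rd d → Rd d) : Prop :=
  ContDiff ℝ 1 H ∧ (∀ x : Rd d, IsUnit (fderiv ℝ H x)) ∧
    ∃ (α : ℝ≥0) (C : ℝ≥0), 0 < α ∧ HolderWith C α (fderiv ℝ H)

/-- `H` is (a lift of) a `C^∞` diffeomorphism of the torus. -/
def IsCinfDiffeoLift {d : ℕ} (H : Rd d → Rd d) : Prop :=
  ContDiff ℝ (⊤ : ℕ∞) H ∧ ∀ x : Rd d, IsUnit (fderiv ℝ H x)

/-- No three eigenvalues of `L` have the same modulus. -/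
def NoThreeSameModulus {d : ℕ} (L : Matrix (Fin d) (Fin d) ℤ) : Prop :=
  ∀ r : ℝ, ((eigsC L).countP (fun z => ‖z‖ = r)) ≤ 2

/-- `L` has no pair of eigenvalues of the form `λ, -λ` or `iλ, -iλ` with `λ` real. -/
def NoOppositePairs {d : ℕ} (L : Matrix (Fin d) (Fin d) ℤ) : Prop :=
  ∀ z ∈ eigsC L, (z.im = 0 ∨ z.re = 0) → -z ∉ eigsC L


/-- A real vector viewed as a complex vector. -/
def toC {d : ℕ} (v : Rd d) : Fin d → ℂ := fun i => (v i : ℂ)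

/-- The sum of the generalized eigenspaces (inside `ℂ^d`) of a real matrix `A` corresponding
to the complex eigenvalues of modulus `ρ`. -/
def genEigSumC {d : ℕ} (A : Matrix (Fin d) (Fin d) ℝ) (ρ : ℝ) : Submodule ℂ (Fin d → ℂ) :=
  ⨆ (μ : ℂ) (_ : ‖μ‖ = ρ),
    Module.End.maxGenEigenspace (Matrix.toLin' (A.map (Complex.ofReal : ℝ → ℂ))) μ

lemma aux_norm_toC {d : ℕ} (u : Rd d) : ‖toC u‖ = ‖u‖ := by
  rw [Pi.norm_def, Pi.norm_def]
  congr 1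
  apply Finset.sup_congr rfl
  intro i _
  simp [toC]

lemma aux_toC_eq_zero {d : ℕ} (u : Rd d) (h : toC u = 0) : u = 0 := by
  funext i
  have := congrFun h i
  simpa [toC] using this

lemma aux_mulVec_toC {d : ℕ} (M : Matrix (Fin d) (Fin d) ℝ) (u : Rd d) :
    (M.map (Complex.ofReal : ℝ → ℂ)).mulVec (toC u) = toC (M.mulVec u) := by
  funext i
  simp only [Matrix.mulVec, dotProduct, Matrix.map_apply, toC]
  push_cast
  rfl

lemma aux_map_mul_ofReal {d : ℕ} (M N : Matrix (Fin d) (Fin d) ℝ) :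
    (M * N).map (Complex.ofReal : ℝ → ℂ)
      = M.map (Complex.ofReal : ℝ → ℂ) * N.map (Complex.ofReal : ℝ → ℂ) := by
  ext i j
  simp [Matrix.mul_apply, Matrix.map_apply]

lemma aux_map_one_ofReal {d : ℕ} :
    (1 : Matrix (Fin d) (Fin d) ℝ).map (Complex.ofReal : ℝ → ℂ) = 1 := by
  ext i j
  by_cases h : i = j <;> simp [Matrix.map_apply, Matrix.one_apply, h]

section AuxCLM

variable {V : Type*} [NormedAddCommGroup V] [NormedSpace ℂ V]

lemma aux_isUnit_clm_of_bijective [FiniteDimensional ℂ V] (f : V →L[ℂ] V)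
    (hf : Function.Bijective f) : IsUnit f := by
  let e : V ≃ₗ[ℂ] V := LinearEquiv.ofBijective (f : V →ₗ[ℂ] V) hf
  let ce : V ≃L[ℂ] V := e.toContinuousLinearEquiv
  have hce : ∀ x, ce x = f x := fun x => rfl
  refine ⟨⟨f, (ce.symm : V →L[ℂ] V), ?_, ?_⟩, rfl⟩
  · ext x
    have := ce.apply_symm_apply x
    rw [hce] at this
    simpa [ContinuousLinearMap.mul_apply] using this
  · ext x
    have := ce.symm_apply_apply x
    rw [hce] at this
    simpa [ContinuousLinearMap.mul_apply] using this

lemma aux_exists_eigvec_of_mem_spectrum [FiniteDimensional ℂ V] (f : V →L[ℂ] V) {μ : ℂ}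
    (h : μ ∈ spectrum ℂ f) : ∃ x : V, x ≠ 0 ∧ f x = μ • x := by
  by_contra hc
  push_neg at hc
  apply spectrum.mem_iff.mp h
  set g : V →L[ℂ] V := algebraMap ℂ (V →L[ℂ] V) μ - f with hg
  have hgapply : ∀ x, g x = μ • x - f x := by
    intro x
    simp [hg, Algebra.algebraMap_eq_smul_one, ContinuousLinearMap.sub_apply]
  have hker : ∀ x, g x = 0 → x = 0 := by
    intro x hx
    by_contra hx0
    apply hc x hx0
    have h2 := hgapply x
    rw [hx] at h2
    exact ((sub_eq_zero.mp h2.symm).symm)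
  have hginj : Function.Injective g := by
    intro x y hxy
    have : g (x - y) = 0 := by rw [map_sub, hxy, sub_self]
    have := hker _ this
    exact sub_eq_zero.mp this
  have hgsurj : Function.Surjective g := by
    have : Function.Injective (g : V →ₗ[ℂ] V) := hginj
    exact LinearMap.injective_iff_surjective.mp this
  exact aux_isUnit_clm_of_bijective g ⟨hginj, hgsurj⟩

lemma aux_spectralRadius_eq [FiniteDimensional ℂ V] [Nontrivial V] [CompleteSpace V]
    (f : V →L[ℂ] V) (ρ : ℝ) (hρ : 0 ≤ ρ)
    (h : ∀ (μ : ℂ) (x : V), x ≠ 0 → f x = μ • x → ‖μ‖ = ρ) :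
    spectralRadius ℂ f = ENNReal.ofReal ρ := by
  obtain ⟨μ₀, hμ₀⟩ := spectrum.nonempty f
  have key : ∀ μ ∈ spectrum ℂ f, (‖μ‖₊ : ℝ≥0) = ρ.toNNReal := by
    intro μ hμ
    obtain ⟨x, hx0, hx⟩ := aux_exists_eigvec_of_mem_spectrum f hμ
    have habs := h μ x hx0 hx
    ext
    rw [coe_nnnorm, Real.coe_toNNReal _ hρ, ← habs]
  rw [spectralRadius]
  apply le_antisymm
  · refine iSup₂_le fun μ hμ => ?_
    rw [key μ hμ, ENNReal.ofReal]
  · have hle := le_iSup₂ (f := fun (μ : ℂ) (_ : μ ∈ spectrum ℂ f) => (‖μ‖₊ : ℝ≥0∞)) μ₀ hμ₀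
    rw [key μ₀ hμ₀] at hle
    exact le_trans (le_of_eq rfl) hle

lemma aux_log_norm_pow_tendsto [CompleteSpace V] (f : V →L[ℂ] V) (ρ : ℝ) (hρ : 0 < ρ)
    (hrad : spectralRadius ℂ f = ENNReal.ofReal ρ) (hne : ∀ n : ℕ, 0 < ‖f ^ n‖) :
    Tendsto (fun n : ℕ => Real.log ‖f ^ n‖ / n) atTop (𝓝 (Real.log ρ)) := by
  have h1 := spectrum.pow_nnnorm_pow_one_div_tendsto_nhds_spectralRadius f
  rw [hrad] at h1
  have h2 : Tendsto (fun n : ℕ => ‖f ^ n‖ ^ (1 / (n : ℝ))) atTop (𝓝 ρ) := by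
    have h3 := (ENNReal.tendsto_toReal (ENNReal.ofReal_ne_top)).comp h1
    have h4 : ∀ n : ℕ, (((‖f ^ n‖₊ : ℝ≥0∞) ^ (1 / (n : ℝ))).toReal)
        = ‖f ^ n‖ ^ (1 / (n : ℝ)) := by
      intro n
      rw [← ENNReal.toReal_rpow, ENNReal.coe_toReal, coe_nnnorm]
    rw [ENNReal.toReal_ofReal hρ.le] at h3
    exact h3.congr h4
  have h5 := (Real.continuousAt_log (ne_of_gt hρ)).tendsto.comp h2
  refine h5.congr fun n => ?_
  simp only [Function.comp_apply]
  rw [Real.log_rpow (hne n), one_div_mul_eq_div]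

lemma aux_vecLimit (f g : V →L[ℂ] V) (hgf : g * f = 1) (hfg : f * g = 1) (c : ℝ)
    (hf : Tendsto (fun n : ℕ => Real.log ‖f ^ n‖ / n) atTop (𝓝 c))
    (hg : Tendsto (fun n : ℕ => Real.log ‖g ^ n‖ / n) atTop (𝓝 (-c)))
    (w : V) (hw : w ≠ 0) :
    Tendsto (fun n : ℕ => Real.log ‖(f ^ n) w‖ / n) atTop (𝓝 c) := by
  have hcomm : Commute g f := hgf.trans hfg.symm
  have hmul : ∀ n : ℕ, (g ^ n) ((f ^ n) w) = w := by
    intro n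
    have h1 : g ^ n * f ^ n = 1 := by rw [← hcomm.mul_pow, hgf, one_pow]
    calc (g ^ n) ((f ^ n) w) = (g ^ n * f ^ n) w := rfl
    _ = w := by rw [h1]; rfl
  have hfw : ∀ n, (f ^ n) w ≠ 0 := fun n h => hw (by rw [← hmul n, h, map_zero])
  have hfwpos : ∀ n, 0 < ‖(f ^ n) w‖ := fun n => norm_pos_iff.mpr (hfw n)
  have hwpos : 0 < ‖w‖ := norm_pos_iff.mpr hw
  have hgpos : ∀ n, 0 < ‖g ^ n‖ := by
    intro n
    refine norm_pos_iff.mpr fun h => hw ?_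
    rw [← hmul n, h]; rfl
  have hfpos : ∀ n, 0 < ‖f ^ n‖ := by
    intro n
    refine norm_pos_iff.mpr fun h => hfw n ?_
    rw [h]; rfl
  have lowlim : Tendsto (fun n : ℕ => (Real.log ‖w‖ - Real.log ‖g ^ n‖) / n) atTop (𝓝 c) := by
    have := (tendsto_const_div_atTop_nhds_zero_nat (Real.log ‖w‖)).sub hg
    simp only [zero_sub, neg_neg] at this
    refine this.congr fun n => ?_
    rw [sub_div]
  have uplim : Tendsto (fun n : ℕ => (Real.log ‖f ^ n‖ + Real.log ‖w‖) / n) atTop (𝓝 c) := by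
    have := hf.add (tendsto_const_div_atTop_nhds_zero_nat (Real.log ‖w‖))
    rw [add_zero] at this
    refine this.congr fun n => ?_
    rw [add_div]
  refine tendsto_of_tendsto_of_tendsto_of_le_of_le' lowlim uplim ?_ ?_
  · filter_upwards [eventually_ge_atTop 1] with n hn
    have hn' : (0 : ℝ) < n := by exact_mod_cast hn
    rw [div_le_div_iff_of_pos_right hn']
    have h1 : ‖w‖ ≤ ‖g ^ n‖ * ‖(f ^ n) w‖ := by
      calc ‖w‖ = ‖(g ^ n) ((f ^ n) w)‖ := by rw [hmul n]
      _ ≤ ‖g ^ n‖ * ‖(f ^ n) w‖ := (g ^ n).le_opNorm _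
    have h2 : Real.log ‖w‖ ≤ Real.log ‖g ^ n‖ + Real.log ‖(f ^ n) w‖ := by
      calc Real.log ‖w‖ ≤ Real.log (‖g ^ n‖ * ‖(f ^ n) w‖) := Real.log_le_log hwpos h1
      _ = _ := Real.log_mul (hgpos n).ne' (hfwpos n).ne'
    linarith
  · filter_upwards [eventually_ge_atTop 1] with n hn
    have hn' : (0 : ℝ) < n := by exact_mod_cast hn
    rw [div_le_div_iff_of_pos_right hn']
    have h1 : ‖(f ^ n) w‖ ≤ ‖f ^ n‖ * ‖w‖ := (f ^ n).le_opNorm _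
    calc Real.log ‖(f ^ n) w‖ ≤ Real.log (‖f ^ n‖ * ‖w‖) := Real.log_le_log (hfwpos n) h1
    _ = _ := Real.log_mul (hfpos n).ne' hwpos.ne'

end AuxCLM

/-- Let `L` be an invertible `d×d` real matrix, `ρ > 0`, and let `E ⊆ ℝ^d`
be the (real points of the) sum of the generalized eigenspaces of `L` for eigenvalues of
modulus `ρ`. Then for every nonzero `v ∈ E`,
`lim_{n→+∞} (1/n) log‖Lⁿ v‖ = log ρ` and `lim_{n→−∞} (1/n) log‖Lⁿ v‖ = log ρ`
(the latter stated as `lim_{n→+∞} (1/n) log‖L⁻ⁿ v‖ = −log ρ`). -/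
theorem statement17 {d : ℕ} (L : Matrix (Fin d) (Fin d) ℝ) (hL : IsUnit L.det)
    (ρ : ℝ) (hρ : 0 < ρ) (v : Rd d) (hv0 : v ≠ 0) (hvE : toC v ∈ genEigSumC L ρ) :
    Filter.Tendsto (fun n : ℕ => Real.log ‖(L ^ n).mulVec v‖ / n)
      Filter.atTop (nhds (Real.log ρ)) ∧
    Filter.Tendsto (fun n : ℕ => Real.log ‖(L⁻¹ ^ n).mulVec v‖ / n)
      Filter.atTop (nhds (- Real.log ρ)) := by
  set A : Matrix (Fin d) (Fin d) ℂ := L.map (Complex.ofReal : ℝ → ℂ) with hA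
  set B : Matrix (Fin d) (Fin d) ℂ := L⁻¹.map (Complex.ofReal : ℝ → ℂ) with hB
  have hBA : B * A = 1 := by
    rw [hA, hB, ← aux_map_mul_ofReal, Matrix.nonsing_inv_mul L hL, aux_map_one_ofReal]
  have hAB : A * B = 1 := by
    rw [hA, hB, ← aux_map_mul_ofReal, Matrix.mul_nonsing_inv L hL, aux_map_one_ofReal]
  set T : Module.End ℂ (Fin d → ℂ) := Matrix.toLin' A with hT
  set S : Module.End ℂ (Fin d → ℂ) := Matrix.toLin' B with hS
  have hST : ∀ x, S (T x) = x := by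
    intro x
    rw [hT, hS, Matrix.toLin'_apply, Matrix.toLin'_apply, Matrix.mulVec_mulVec, hBA,
      Matrix.one_mulVec]
  have hTS : ∀ x, T (S x) = x := by
    intro x
    rw [hT, hS, Matrix.toLin'_apply, Matrix.toLin'_apply, Matrix.mulVec_mulVec, hAB,
      Matrix.one_mulVec]
  set E : Submodule ℂ (Fin d → ℂ) := genEigSumC L ρ with hE
  have hEdef : E = ⨆ (μ : ℂ) (_ : ‖μ‖ = ρ), Module.End.maxGenEigenspace T μ := rfl
  have hTE : ∀ x ∈ E, T x ∈ E := by
    have hmap : Submodule.map T E ≤ E := by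
      rw [hEdef, Submodule.map_iSup]
      refine iSup_le fun μ => ?_
      rw [Submodule.map_iSup]
      refine iSup_le fun hμ => ?_
      refine le_trans ?_
        (le_iSup₂ (f := fun (μ' : ℂ) (_ : ‖μ'‖ = ρ) =>
          Module.End.maxGenEigenspace T μ') μ hμ)
      intro y hy
      rw [Submodule.mem_map] at hy
      obtain ⟨z, hz, rfl⟩ := hy
      exact Module.End.mapsTo_maxGenEigenspace_of_comm (Commute.refl T) μ hz
    intro x hx
    exact hmap ⟨x, hx, rfl⟩
  have claim : ∀ (μ : ℂ) (y : Fin d → ℂ), y ∈ Module.End.maxGenEigenspace T μ → y ∈ E →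
      y ≠ 0 → ‖μ‖ = ρ := by
    intro μ y hy hyE hy0
    by_contra hne
    have hd := Module.End.independent_maxGenEigenspace T μ
    have hEle : E ≤ ⨆ (μ' : ℂ) (_ : μ' ≠ μ), Module.End.maxGenEigenspace T μ' := by
      rw [hEdef]
      refine iSup₂_le fun μ' hμ' => ?_
      have hne' : μ' ≠ μ := by rintro rfl; exact hne hμ'
      exact le_iSup₂ (f := fun (μ'' : ℂ) (_ : μ'' ≠ μ) =>
        Module.End.maxGenEigenspace T μ'') μ' hne'
    exact hy0 (Submodule.disjoint_def.mp hd y hy (hEle hyE))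
  set fE : E →ₗ[ℂ] E := T.restrict hTE with hfE
  have hfEinj : Function.Injective fE := by
    intro x y hxy
    have h1 : T x.val = T y.val := by
      have := congrArg Subtype.val hxy
      simpa [hfE, LinearMap.restrict_coe_apply] using this
    exact Subtype.ext (Function.LeftInverse.injective hST h1)
  have hfEsurj : Function.Surjective fE := LinearMap.injective_iff_surjective.mp hfEinj
  have hSE : ∀ x ∈ E, S x ∈ E := by
    intro x hx
    obtain ⟨y, hy⟩ := hfEsurj ⟨x, hx⟩
    have hy' : T y.val = x := by
      have := congrArg Subtype.val hy
      simpa [hfE, LinearMap.restrict_coe_apply] using this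
    have h2 : S x = y.val := by rw [← hy', hST]
    rw [h2]; exact y.2
  set gE : E →ₗ[ℂ] E := S.restrict hSE with hgE
  set fc : E →L[ℂ] E := LinearMap.toContinuousLinearMap fE with hfc'
  set gc : E →L[ℂ] E := LinearMap.toContinuousLinearMap gE with hgc'
  have hfc : ∀ x : E, ((fc x : E) : Fin d → ℂ) = T (x : Fin d → ℂ) := fun x => rfl
  have hgc : ∀ x : E, ((gc x : E) : Fin d → ℂ) = S (x : Fin d → ℂ) := fun x => rfl
  have hgf : gc * fc = 1 := by
    refine ContinuousLinearMap.ext fun x => Subtype.ext ?_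
    rw [ContinuousLinearMap.mul_apply, ContinuousLinearMap.one_apply, hgc _, hfc _, hST]
  have hfg : fc * gc = 1 := by
    refine ContinuousLinearMap.ext fun x => Subtype.ext ?_
    rw [ContinuousLinearMap.mul_apply, ContinuousLinearMap.one_apply, hfc _, hgc _, hTS]
  set wE : E := ⟨toC v, hvE⟩ with hwE
  have hwE0 : wE ≠ 0 := by
    intro h
    exact hv0 (aux_toC_eq_zero v (congrArg Subtype.val h))
  haveI : Nontrivial E := nontrivial_of_ne wE 0 hwE0
  haveI : CompleteSpace E := FiniteDimensional.complete ℂ E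
  have heigf : ∀ (μ : ℂ) (x : E), x ≠ 0 → fc x = μ • x → ‖μ‖ = ρ := by
    intro μ x hx0 hx
    have hval : T (x : Fin d → ℂ) = μ • (x : Fin d → ℂ) := by
      have := congrArg Subtype.val hx
      rw [hfc] at this
      simpa using this
    have hmem : (x : Fin d → ℂ) ∈ Module.End.maxGenEigenspace T μ := by
      rw [Module.End.mem_maxGenEigenspace]
      refine ⟨1, ?_⟩
      simp [pow_one, LinearMap.sub_apply, hval]
    exact claim μ x.val hmem x.2 (fun h => hx0 (Subtype.ext h))
  have heigg : ∀ (μ : ℂ) (x : E), x ≠ 0 → gc x = μ • x → ‖μ‖ = ρ⁻¹ := by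
    intro μ x hx0 hx
    have hxx : x = μ • fc x := by
      have h1 : fc (gc x) = x := by
        rw [← ContinuousLinearMap.mul_apply, hfg, ContinuousLinearMap.one_apply]
      calc x = fc (gc x) := h1.symm
      _ = fc (μ • x) := by rw [hx]
      _ = μ • fc x := _root_.map_smul fc μ x
    have hμ0 : μ ≠ 0 := by
      rintro rfl
      rw [zero_smul] at hxx
      exact hx0 hxx
    have h2 : fc x = μ⁻¹ • x := by
      have := congrArg (fun z => μ⁻¹ • z) hxx
      simp only [smul_smul, inv_mul_cancel₀ hμ0, one_smul] at this
      exact this.symm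
    have h3 := heigf μ⁻¹ x hx0 h2
    rw [norm_inv] at h3
    rw [← h3, inv_inv]
  have hradf := aux_spectralRadius_eq fc ρ hρ.le heigf
  have hradg := aux_spectralRadius_eq gc ρ⁻¹ (inv_pos.mpr hρ).le heigg
  have hcomm : Commute gc fc := hgf.trans hfg.symm
  have hpow1 : ∀ n : ℕ, gc ^ n * fc ^ n = 1 := fun n => by
    rw [← hcomm.mul_pow, hgf, one_pow]
  have happ : ∀ n : ℕ, (gc ^ n) ((fc ^ n) wE) = wE := fun n => by
    rw [← ContinuousLinearMap.mul_apply, hpow1 n, ContinuousLinearMap.one_apply]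
  have hfwne : ∀ n : ℕ, (fc ^ n) wE ≠ 0 := fun n h => hwE0 (by rw [← happ n, h, map_zero])
  have hfpos : ∀ n : ℕ, 0 < ‖fc ^ n‖ := by
    intro n
    have h1 : 0 < ‖(fc ^ n) wE‖ := norm_pos_iff.mpr (hfwne n)
    have hw : 0 < ‖wE‖ := norm_pos_iff.mpr hwE0
    calc (0:ℝ) < ‖(fc ^ n) wE‖ / ‖wE‖ := div_pos h1 hw
    _ ≤ ‖fc ^ n‖ := (fc ^ n).ratio_le_opNorm wE
  have hgpos : ∀ n : ℕ, 0 < ‖gc ^ n‖ := by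
    intro n
    have h1 : 0 < ‖(fc ^ n) wE‖ := norm_pos_iff.mpr (hfwne n)
    have hw : 0 < ‖wE‖ := norm_pos_iff.mpr hwE0
    have h2 : 0 < ‖(gc ^ n) ((fc ^ n) wE)‖ := by rw [happ n]; exact hw
    calc (0:ℝ) < ‖(gc ^ n) ((fc ^ n) wE)‖ / ‖(fc ^ n) wE‖ := div_pos h2 h1
    _ ≤ ‖gc ^ n‖ := (gc ^ n).ratio_le_opNorm _
  have hF := aux_log_norm_pow_tendsto fc ρ hρ hradf hfpos
  have hG' := aux_log_norm_pow_tendsto gc ρ⁻¹ (inv_pos.mpr hρ) hradg hgpos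
  have hG : Tendsto (fun n : ℕ => Real.log ‖gc ^ n‖ / n) atTop (𝓝 (-Real.log ρ)) := by
    rwa [Real.log_inv] at hG'
  have main1 := aux_vecLimit fc gc hgf hfg (Real.log ρ) hF hG wE hwE0
  have main2 := aux_vecLimit gc fc hfg hgf (-Real.log ρ) hG (by rw [neg_neg]; exact hF) wE hwE0
  have hvalf : ∀ n : ℕ, (((fc ^ n) wE : E) : Fin d → ℂ) = toC ((L ^ n).mulVec v) := by
    intro n
    induction n with
    | zero =>
      rw [pow_zero, pow_zero, ContinuousLinearMap.one_apply, Matrix.one_mulVec]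
    | succ n ih =>
      rw [pow_succ' fc n, ContinuousLinearMap.mul_apply, hfc _, ih, hT, Matrix.toLin'_apply,
        hA, aux_mulVec_toC, Matrix.mulVec_mulVec, ← pow_succ' L n]
  have hvalg : ∀ n : ℕ, (((gc ^ n) wE : E) : Fin d → ℂ) = toC ((L⁻¹ ^ n).mulVec v) := by
    intro n
    induction n with
    | zero =>
      rw [pow_zero, pow_zero, ContinuousLinearMap.one_apply, Matrix.one_mulVec]
    | succ n ih =>
      rw [pow_succ' gc n, ContinuousLinearMap.mul_apply, hgc _, ih, hS, Matrix.toLin'_apply,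
        hB, aux_mulVec_toC, Matrix.mulVec_mulVec, ← pow_succ' L⁻¹ n]
  have hnormf : ∀ n : ℕ, ‖(fc ^ n) wE‖ = ‖(L ^ n).mulVec v‖ := by
    intro n
    rw [← aux_norm_toC ((L ^ n).mulVec v), ← hvalf n, Submodule.norm_coe]
  have hnormg : ∀ n : ℕ, ‖(gc ^ n) wE‖ = ‖(L⁻¹ ^ n).mulVec v‖ := by
    intro n
    rw [← aux_norm_toC ((L⁻¹ ^ n).mulVec v), ← hvalg n, Submodule.norm_coe]
  constructor
  · exact main1.congr fun n => by rw [hnormf n]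
  · exact main2.congr fun n => by rw [hnormg n]

end
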